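/- Let n, k, b be integers with 1 ≤ k-1 ≤ b ≤ n, let C = {X ∈ V_{n,k,b} : n-b ≤ min(X) and max(X) ≤ b} and R = V_{n,k,b} \ C. Then the number of sets X ∈ R with min(X) + max(X) < n equals the number of sets X ∈ R with min(X) + max(X) > n. -/

import Mathlib

/-- The maximum element of a finite set of naturals (`0` for the empty set). -/
def fmax (X : Finset ℕ) : ℕ := WithBot.unbotD 0 X.max

/-- The minimum element of a finite set of naturals (`0` for the empty set). -/
def fmin (X : Finset ℕ) : ℕ := WithTop.untopD 0 X.min

/-- The vertex set `V_{n,k,b}`: all `k`-element subsets `X` of `{0,…,n}`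
with `max X - min X ≤ b`. -/
def Vnkb (n k b : ℕ) : Finset (Finset ℕ) :=
  ((Finset.range (n + 1)).powersetCard k).filter (fun X => fmax X - fmin X ≤ b)

/-- The graph `G_{n,k,b}`: two distinct vertices `X, Y` are adjacent iff
`max (X ∪ Y) - min (X ∪ Y) ≤ b`. -/
def Gnkb (n k b : ℕ) : SimpleGraph (Vnkb n k b) where
  Adj X Y := X ≠ Y ∧ fmax (X.1 ∪ Y.1) - fmin (X.1 ∪ Y.1) ≤ b
  symm := by
    constructor
    rintro X Y ⟨h1, h2⟩
    exact ⟨h1.symm, by rwa [Finset.union_comm]⟩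
  loopless := by constructor; rintro X ⟨h1, -⟩; exact h1 rfl

/-- The bandwidth of a finite graph: the minimum over all bijective labellings of the
vertices by `{0, …, |V|-1}` (equivalently `{1, …, |V|}`) of the maximal absolute
label difference along an edge. -/
noncomputable def bandwidth {V : Type*} [Fintype V] (G : SimpleGraph V) : ℕ :=
  sInf {m : ℕ | ∃ f : V ≃ Fin (Fintype.card V),
    ∀ u v : V, G.Adj u v → (((f u : ℕ) : ℤ) - ((f v : ℕ) : ℤ)).natAbs ≤ m}

/-!
The reflection `x ↦ n - x` maps `V_{n,k,b}` onto itself and sends `(min X, max X)` to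
`(n - max X, n - min X)`. Hence it preserves `C`, so also `R`, and turns `min X + max X` into
`2n - (min X + max X)`: it is an involution of `R` exchanging the two sets being counted.
-/

namespace Finset

variable {α β : Type*} [LinearOrder α] [LinearOrder β] {f : α → β}

theorem max'_image_of_antitone (hf : Antitone f) (s : Finset α) (h : (s.image f).Nonempty) :
    (s.image f).max' h = f (s.min' h.of_image) := by
  refine le_antisymm (max'_le _ _ _ ?_) (le_max' _ _ (mem_image_of_mem f (min'_mem _ _)))
  simp only [mem_image, forall_exists_index, and_imp, forall_apply_eq_imp_iff₂]
  exact fun a ha => hf (min'_le _ _ ha)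

theorem min'_image_of_antitone (hf : Antitone f) (s : Finset α) (h : (s.image f).Nonempty) :
    (s.image f).min' h = f (s.max' h.of_image) := by
  refine le_antisymm (min'_le _ _ (mem_image_of_mem f (max'_mem _ _))) (le_min' _ _ _ ?_)
  simp only [mem_image, forall_exists_index, and_imp, forall_apply_eq_imp_iff₂]
  exact fun a ha => hf (le_max' _ _ ha)

end Finset

open Finset

theorem fmax_eq_max' {X : Finset ℕ} (h : X.Nonempty) : fmax X = X.max' h := by
  rw [fmax, ← coe_max' h, WithBot.unbotD_coe]

theorem fmin_eq_min' {X : Finset ℕ} (h : X.Nonempty) : fmin X = X.min' h := by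
  rw [fmin, ← coe_min' h, WithTop.untopD_coe]

theorem fmin_le_fmax {X : Finset ℕ} (h : X.Nonempty) : fmin X ≤ fmax X := by
  rw [fmin_eq_min' h, fmax_eq_max' h]
  exact min'_le_max' X h

theorem fmax_le_of_subset_range {X : Finset ℕ} {n : ℕ} (hX : X ⊆ range (n + 1)) :
    fmax X ≤ n := by
  rcases X.eq_empty_or_nonempty with rfl | h
  · exact Nat.zero_le n
  · rw [fmax_eq_max' h]
    exact Nat.lt_succ_iff.mp (mem_range.mp (hX (max'_mem X h)))

def reflect (n : ℕ) (X : Finset ℕ) : Finset ℕ := X.image (n - ·)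

section reflect

variable {n : ℕ} {X : Finset ℕ}

theorem fmax_reflect (h : X.Nonempty) : fmax (reflect n X) = n - fmin X := by
  rw [reflect, fmax_eq_max' (h.image _), fmin_eq_min' h,
    max'_image_of_antitone (fun _ _ hxy => Nat.sub_le_sub_left hxy n)]

theorem fmin_reflect (h : X.Nonempty) : fmin (reflect n X) = n - fmax X := by
  rw [reflect, fmin_eq_min' (h.image _), fmax_eq_max' h,
    min'_image_of_antitone (fun _ _ hxy => Nat.sub_le_sub_left hxy n)]

theorem injOn_sub_range : Set.InjOn (n - ·) (range (n + 1) : Set ℕ) := by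
  intro x hx y hy hxy
  simp only [coe_range, Set.mem_Iio] at hx hy hxy
  omega

theorem reflect_subset_range : reflect n X ⊆ range (n + 1) := by
  intro y hy
  obtain ⟨x, -, rfl⟩ := mem_image.mp hy
  exact mem_range.mpr (Nat.lt_succ_of_le (Nat.sub_le n x))

theorem reflect_reflect (hX : X ⊆ range (n + 1)) : reflect n (reflect n X) = X := by
  rw [reflect, reflect, image_image]
  refine (image_congr fun x hx => ?_).trans (image_id (s := X))
  have := mem_range.mp (hX hx)
  simp only [Function.comp_apply, id]
  omega

theorem card_reflect (hX : X ⊆ range (n + 1)) : (reflect n X).card = X.card :=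
  card_image_of_injOn (injOn_sub_range.mono (by exact_mod_cast hX))

end reflect

theorem subset_range_of_mem_Vnkb {n k b : ℕ} {X : Finset ℕ} (hX : X ∈ Vnkb n k b) :
    X ⊆ range (n + 1) :=
  (mem_powersetCard.mp (mem_filter.mp hX).1).1

theorem nonempty_of_mem_Vnkb {n k b : ℕ} {X : Finset ℕ} (hk : 0 < k) (hX : X ∈ Vnkb n k b) :
    X.Nonempty :=
  card_pos.mp ((mem_powersetCard.mp (mem_filter.mp hX).1).2 ▸ hk)

theorem reflect_mem_Vnkb {n k b : ℕ} {X : Finset ℕ} (hX : X ∈ Vnkb n k b) :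
    reflect n X ∈ Vnkb n k b := by
  obtain ⟨hXV, hwidth⟩ := mem_filter.mp hX
  obtain ⟨hsub, hcard⟩ := mem_powersetCard.mp hXV
  refine mem_filter.mpr ⟨mem_powersetCard.mpr ⟨reflect_subset_range, hcard ▸ card_reflect hsub⟩, ?_⟩
  rcases X.eq_empty_or_nonempty with rfl | hne
  · exact hwidth
  · rw [fmax_reflect hne, fmin_reflect hne]
    have := fmin_le_fmax hne
    have := fmax_le_of_subset_range hsub
    omega

theorem card_R_lt_eq_card_R_gt_general (n k b : ℕ) (h1 : 1 ≤ k - 1) :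
    ((Vnkb n k b).filter
        (fun X => ¬(n - b ≤ fmin X ∧ fmax X ≤ b) ∧ fmin X + fmax X < n)).card =
    ((Vnkb n k b).filter
        (fun X => ¬(n - b ≤ fmin X ∧ fmax X ≤ b) ∧ fmin X + fmax X > n)).card := by
  have key : ∀ X ∈ Vnkb n k b, reflect n X ∈ Vnkb n k b ∧ reflect n (reflect n X) = X ∧
      fmin (reflect n X) = n - fmax X ∧ fmax (reflect n X) = n - fmin X ∧
      fmin X ≤ fmax X ∧ fmax X ≤ n := fun X hX =>
    have hne := nonempty_of_mem_Vnkb (by omega) hX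
    ⟨reflect_mem_Vnkb hX, reflect_reflect (subset_range_of_mem_Vnkb hX), fmin_reflect hne,
      fmax_reflect hne, fmin_le_fmax hne, fmax_le_of_subset_range (subset_range_of_mem_Vnkb hX)⟩
  refine card_nbij' (reflect n) (reflect n) ?_ ?_ ?_ ?_ <;> intro X hX <;>
    simp only [coe_filter, Set.mem_ofPred_eq] at hX ⊢ <;>
    obtain ⟨hV, hR, hpos⟩ := hX <;>
    obtain ⟨hV', hinv, hmin, hmax, hle, hn⟩ := key X hV
  · exact ⟨hV', by rw [hmin, hmax]; omega⟩
  · exact ⟨hV', by rw [hmin, hmax]; omega⟩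
  · exact hinv
  · exact hinv

/-- For `R = V_{n,k,b} \ C` with `C = {X ∈ V_{n,k,b} : n-b ≤ min X ∧ max X ≤ b}`,
the number of `X ∈ R` with `min X + max X < n` equals the number of `X ∈ R` with
`min X + max X > n`. -/
theorem card_R_lt_eq_card_R_gt (n k b : ℕ) (h1 : 1 ≤ k - 1) (h2 : k - 1 ≤ b) (h3 : b ≤ n) :
    ((Vnkb n k b).filter
        (fun X => ¬(n - b ≤ fmin X ∧ fmax X ≤ b) ∧ fmin X + fmax X < n)).card =
    ((Vnkb n k b).filter
        (fun X => ¬(n - b ≤ fmin X ∧ fmax X ≤ b) ∧ fmin X + fmax X > n)).card :=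
  card_R_lt_eq_card_R_gt_general n k b h1
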